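/- arXiv:1703.01441 — 3 statements merged into one kernel-verified Lean document; each statement's English description precedes it below -/
import Mathlib

section
/- Let C ⊆ F_q^n be a linear code and a ∈ (F_q^*)^n a vector with all coordinates nonzero. If for every nonzero codeword u ∈ C the vector a²*u does not lie in C^⊥ (where a² = a*a is the coordinatewise square), then the code a*C is linear complementary dual, i.e., (a*C) ∩ (a*C)^⊥ = {0}. -/
/-- The Euclidean dual of a linear code `C ⊆ F^n`. -/
def dualCode {F : Type*} [Field F] {n : ℕ} (C : Submodule F (Fin n → F)) :
    Submodule F (Fin n → F) where
  carrier := {v | ∀ c ∈ C, ∑ i, v i * c i = 0}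
  add_mem' := by
    intro a b ha hb c hc
    simp only [Set.mem_setOf_eq] at *
    simp [Pi.add_apply, add_mul, Finset.sum_add_distrib, ha c hc, hb c hc]
  zero_mem' := by intro c hc; simp
  smul_mem' := by
    intro r a ha c hc
    simp only [Set.mem_setOf_eq] at *
    simp [Pi.smul_apply, smul_eq_mul, mul_assoc, ← Finset.mul_sum, ha c hc]

/-- Coordinatewise (Schur) multiplication by a fixed vector `a`, as a linear map. -/
def schurMap {F : Type*} [Field F] {n : ℕ} (a : Fin n → F) :
    (Fin n → F) →ₗ[F] (Fin n → F) where
  toFun v := a * v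
  map_add' u v := by funext i; simp [Pi.mul_apply, Pi.add_apply, mul_add]
  map_smul' r v := by funext i; simp [Pi.mul_apply, Pi.smul_apply, smul_eq_mul]; ring

theorem schur_scaled_code_is_LCD {F : Type*} [Field F] [Fintype F] {n : ℕ}
    (C : Submodule F (Fin n → F)) (a : Fin n → F) (ha : ∀ i, a i ≠ 0)
    (h : ∀ u ∈ C, u ≠ 0 → a * a * u ∉ dualCode C) :
    C.map (schurMap a) ⊓ dualCode (C.map (schurMap a)) = ⊥ := by
  rw [eq_bot_iff]
  rintro x ⟨hx1, hx2⟩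
  obtain ⟨u, hu, rfl⟩ := hx1
  by_cases hu0 : u = 0
  · simp [hu0, schurMap]
  exfalso
  apply h u hu hu0
  intro c hc
  have := hx2 (schurMap a c) ⟨c, hc, rfl⟩
  simp only [schurMap, LinearMap.coe_mk, AddHom.coe_mk, Pi.mul_apply] at this ⊢
  rw [← this]
  apply Finset.sum_congr rfl
  intro i _
  ring
end

section
/- Let C ⊆ F_q^n be a linear code. For a nonzero codeword u ∈ C, define T_u(C) = {v ∈ (F_q^*)^n : v²*u ∈ C^⊥}. If the union over all nonzero u ∈ C of the sets T_u(C) has cardinality strictly less than (q-1)^n, then there exists a ∈ (F_q^*)^n such that a*C is an LCD code. -/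
theorem exists_LCD_equivalent_of_small_union {F : Type*} [Field F] [Fintype F] {n : ℕ}
    (C : Submodule F (Fin n → F))
    (h : Nat.card (⋃ u ∈ {u : Fin n → F | u ∈ C ∧ u ≠ 0},
          {v : Fin n → F | (∀ i, v i ≠ 0) ∧ v * v * u ∈ dualCode C})
        < (Fintype.card F - 1) ^ n) :
    ∃ a : Fin n → F, (∀ i, a i ≠ 0) ∧
      C.map (schurMap a) ⊓ dualCode (C.map (schurMap a)) = ⊥ := by
  classical
  set U := (⋃ u ∈ {u : Fin n → F | u ∈ C ∧ u ≠ 0},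
      {v : Fin n → F | (∀ i, v i ≠ 0) ∧ v * v * u ∈ dualCode C}) with hU
  set S : Set (Fin n → F) := {v | ∀ i, v i ≠ 0} with hSdef
  have hScard : Nat.card S = (Fintype.card F - 1) ^ n := by
    have e : S ≃ (∀ _ : Fin n, {x : F // x ≠ 0}) := Equiv.subtypePiEquivPi (p := fun _ (x : F) => x ≠ 0)
    rw [Nat.card_congr e, Nat.card_pi]
    have : Nat.card {x : F // x ≠ 0} = Fintype.card F - 1 := by
      rw [Nat.card_eq_fintype_card, Fintype.card_subtype_compl, Fintype.card_subtype_eq]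
    simp [this]
  -- find a ∈ S \ U
  have hex : ∃ a, a ∈ S ∧ a ∉ U := by
    by_contra hc
    push_neg at hc
    have hsub : S ⊆ U := fun a ha => hc a ha
    have := Nat.card_mono (Set.toFinite U) hsub
    omega
  obtain ⟨a, haS, haU⟩ := hex
  refine ⟨a, haS, ?_⟩
  rw [Submodule.eq_bot_iff]
  rintro x ⟨hx1, hx2⟩
  obtain ⟨c, hcC, rfl⟩ := hx1
  have hmap : ∀ c' ∈ C, schurMap a c' ∈ C.map (schurMap a) :=
    fun c' hc' => ⟨c', hc', rfl⟩
  -- a*a*c ∈ dualCode C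
  have hdual : a * a * c ∈ dualCode C := by
    intro c' hc'
    have := hx2 (schurMap a c') (hmap c' hc')
    calc ∑ i, (a * a * c) i * c' i = ∑ i, (schurMap a c) i * (schurMap a c') i := by
          apply Finset.sum_congr rfl
          intro i _
          simp [schurMap, Pi.mul_apply]
          ring
      _ = 0 := this
  by_cases hc0 : c = 0
  · subst hc0; simp [schurMap]
  · exfalso
    apply haU
    rw [hU]
    refine Set.mem_biUnion (show c ∈ {u : Fin n → F | u ∈ C ∧ u ≠ 0} from ⟨hcC, hc0⟩) ?_
    exact ⟨haS, hdual⟩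
end

section
/- Let F_q have characteristic 2, C ⊆ F_q^n be a linear code, and u ∈ C a nonzero codeword with support I of size w. With T_u(C) = {v ∈ (F_q^*)^n : v²*u ∈ C^⊥} and S_I(C^⊥) = {c ∈ C^⊥ : supp(c) = I}, one has |T_u(C)| ≤ (q-1)^{n-w} · |S_I(C^⊥)|. -/
private lemma card_zero_set_aux {F : Type*} [Field F] [DecidableEq F] {n : ℕ} (u : Fin n → F) :
    Fintype.card {i : Fin n // u i = 0} = n - hammingNorm u := by
  classical
  have hpart := Finset.card_filter_add_card_filter_not
    (s := (Finset.univ : Finset (Fin n))) (p := fun i => u i = 0)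
  simp only [Finset.card_univ, Fintype.card_fin] at hpart
  have h1 : Fintype.card {i : Fin n // u i = 0}
      = (Finset.univ.filter fun i => u i = 0).card := Fintype.card_subtype _
  have hn : hammingNorm u = (Finset.univ.filter fun i => ¬ u i = 0).card := by
    rw [hammingNorm]
  omega

theorem card_T_le_card_S_mul {F : Type*} [Field F] [Fintype F] [DecidableEq F]
    (h2 : ringChar F = 2) {n : ℕ}
    (C : Submodule F (Fin n → F)) (u : Fin n → F) (hu : u ∈ C) (hu0 : u ≠ 0) :
    Nat.card {v : Fin n → F | (∀ i, v i ≠ 0) ∧ v * v * u ∈ dualCode C}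
      ≤ (Fintype.card F - 1) ^ (n - hammingNorm u) *
        Nat.card {c : Fin n → F | c ∈ dualCode C ∧
          {i : Fin n | c i ≠ 0} = {i : Fin n | u i ≠ 0}} := by
  classical
  haveI hchar : CharP F 2 := h2 ▸ ringChar.charP F
  have h20 : (2 : F) = 0 := by
    have := CharP.cast_eq_zero F 2
    simpa using this
  have hsq : ∀ x y : F, x * x = y * y → x = y := by
    intro x y h
    have hxy : (x + y) * (x + y) = 0 := by linear_combination h + (y * y + x * y) * h20
    have hx : x = -y := eq_neg_of_add_eq_zero_left (mul_self_eq_zero.mp hxy)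
    simpa [CharTwo.neg_eq] using hx
  let S := {c : Fin n → F | c ∈ dualCode C ∧ {i : Fin n | c i ≠ 0} = {i : Fin n | u i ≠ 0}}
  let f : {v : Fin n → F // (∀ i, v i ≠ 0) ∧ v * v * u ∈ dualCode C} →
      ({i : Fin n // u i = 0} → {x : F // x ≠ 0}) × S := fun v =>
    ⟨fun i => ⟨v.1 i.1, v.2.1 i.1⟩,
     ⟨v.1 * v.1 * u, v.2.2, by
        ext i
        simp only [Set.mem_setOf_eq, Pi.mul_apply]
        constructor
        · intro h hui; exact h (by simp [hui])
        · intro h hc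
          rcases mul_eq_zero.mp hc with hc | hc
          · rcases mul_eq_zero.mp hc with hc | hc <;> exact absurd hc (v.2.1 i)
          · exact h hc⟩⟩
  have hf : Function.Injective f := by
    intro v w h
    have h1 := congrArg Prod.fst h
    have h2' := congrArg Subtype.val (congrArg Prod.snd h)
    simp only [f] at h1 h2'
    apply Subtype.ext
    funext i
    by_cases hui : u i = 0
    · exact congrArg Subtype.val (congrFun h1 ⟨i, hui⟩)
    · have := congrFun h2' i
      simp only [Pi.mul_apply] at this
      exact hsq _ _ (mul_right_cancel₀ hui this)
  have hle : Nat.card {v : Fin n → F | (∀ i, v i ≠ 0) ∧ v * v * u ∈ dualCode C}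
      ≤ Nat.card (({i : Fin n // u i = 0} → {x : F // x ≠ 0}) × S) :=
    Nat.card_le_card_of_injective f hf
  rw [Nat.card_prod] at hle
  have hc1 : Nat.card ({i : Fin n // u i = 0} → {x : F // x ≠ 0})
      = (Fintype.card F - 1) ^ (n - hammingNorm u) := by
    rw [Nat.card_eq_fintype_card, Fintype.card_fun]
    congr 1
    · rw [Fintype.card_subtype_compl, Fintype.card_subtype_eq]
    · exact card_zero_set_aux u
  rw [hc1] at hle
  exact hle
end
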